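/- Let W be a normal random variable and δ > 0. Then inf{ E[log|ε W² − y|] : 0 < ε ≤ 1, y > δ } > −∞. -/

import Mathlib

/-! The negative part of `log |εw² - y|` is dominated, uniformly in `ε > 0` and `y > δ`, by a
constant, a multiple of `|w|` and the negative parts of `log |w ∓ √(y/ε)|`. As the Gaussian
density is bounded by `M`, the expectation of `(log |W - a|)⁻` is at most `M ∫ (log |u|)⁻ du < ∞`
whatever the shift `a`. Negative parts are taken in `ℝ≥0∞` as `ENNReal.ofReal (-Real.log x)`;
`Real.log` is even, so `Real.log x` already means `log |x|`. -/

open ProbabilityTheory MeasureTheory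

open scoped ENNReal

theorem neg_toReal_lintegral_ofReal_neg_le_integral {α : Type*} [MeasurableSpace α]
    (μ : Measure α) (f : α → ℝ) :
    -(∫⁻ x, ENNReal.ofReal (-f x) ∂μ).toReal ≤ ∫ x, f x ∂μ := by
  by_cases hf : Integrable f μ
  · rw [integral_eq_lintegral_pos_part_sub_lintegral_neg_part hf]
    linarith [ENNReal.toReal_nonneg (a := ∫⁻ x, ENNReal.ofReal (f x) ∂μ)]
  · rw [integral_undef hf, neg_nonpos]
    exact ENNReal.toReal_nonneg

theorem lintegral_ofReal_neg_log_lt_top : ∫⁻ u, ENNReal.ofReal (-Real.log u) < ∞ := by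
  have hint : Integrable ((Set.Icc (-1 : ℝ) 1).indicator fun u => -Real.log u) :=
    (integrable_indicator_iff measurableSet_Icc).2
      ((intervalIntegrable_iff_integrableOn_Icc_of_le (by norm_num)).1
        intervalIntegral.intervalIntegrable_log').neg
  refine lt_of_le_of_lt (lintegral_mono fun u => ?_) hint.lintegral_lt_top
  by_cases hu : u ∈ Set.Icc (-1 : ℝ) 1
  · rw [Set.indicator_of_mem hu]
  · rw [Set.indicator_of_notMem hu]
    refine ENNReal.ofReal_le_ofReal (neg_nonpos.2 ?_)
    rw [← Real.log_abs]
    refine Real.log_nonneg ?_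
    rw [Set.mem_Icc, not_and_or, not_le, not_le] at hu
    rcases hu with hu | hu
    · exact le_abs.2 (Or.inr (by linarith))
    · exact le_abs.2 (Or.inl hu.le)

theorem lintegral_comp_sub_withDensity_le {G : Type*} [MeasurableSpace G] [AddGroup G]
    [MeasurableAdd G] (ν : Measure G) [ν.IsAddRightInvariant] {f : G → ℝ≥0∞}
    (hf : Measurable f) {M : ℝ≥0∞} (hM : M ≠ ∞) (hfM : ∀ x, f x ≤ M) (g : G → ℝ≥0∞) (a : G) :
    ∫⁻ x, g (x - a) ∂ν.withDensity f ≤ M * ∫⁻ x, g x ∂ν :=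
  calc ∫⁻ x, g (x - a) ∂ν.withDensity f ≤ ∫⁻ x, f x * g (x - a) ∂ν :=
        lintegral_withDensity_le_lintegral_mul ν hf _
    _ ≤ ∫⁻ x, M * g (x - a) ∂ν := lintegral_mono fun x => mul_le_mul_left (hfM x) _
    _ = M * ∫⁻ x, g x ∂ν := by rw [lintegral_const_mul' M _ hM, lintegral_sub_right_eq_self]

theorem gaussianPDF_le (m : ℝ) (v : NNReal) (x : ℝ) :
    gaussianPDF m v x ≤ ENNReal.ofReal (√(2 * Real.pi * v))⁻¹ := by
  refine ENNReal.ofReal_le_ofReal (mul_le_of_le_one_right (by positivity) ?_)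
  rw [Real.exp_le_one_iff, neg_div, neg_nonpos]
  positivity

theorem lintegral_ofReal_neg_log_sub_le_gaussianReal (m : ℝ) {v : NNReal} (hv : v ≠ 0) (a : ℝ) :
    ∫⁻ w, ENNReal.ofReal (-Real.log (w - a)) ∂gaussianReal m v ≤
      ENNReal.ofReal (√(2 * Real.pi * v))⁻¹ * ∫⁻ u, ENNReal.ofReal (-Real.log u) := by
  rw [gaussianReal_of_var_ne_zero m hv]
  exact lintegral_comp_sub_withDensity_le _ (measurable_gaussianPDF m v) ENNReal.ofReal_ne_top
    (gaussianPDF_le m v) _ a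

theorem Real.neg_log_le_inv {x : ℝ} (hx : 0 < x) : -Real.log x ≤ x⁻¹ := by
  have := Real.log_le_sub_one_of_pos (inv_pos.2 hx)
  rw [Real.log_inv] at this
  linarith

theorem ofReal_neg_log_abs_sub_le (w r : ℝ) :
    ENNReal.ofReal (-Real.log (|w| - r)) ≤
      ENNReal.ofReal (-Real.log (w - r)) + ENNReal.ofReal (-Real.log (w + r)) := by
  rcases abs_choice w with hw | hw <;> rw [hw]
  · exact le_self_add
  · rw [show -w - r = -(w + r) by ring, Real.log_neg_eq_log]
    exact le_add_self

/-- Near the roots `±√(y/ε)` use `εw² - y = (|w| - r) · ε(|w| + r)`, where `ε(|w| + r) ≥ ε|w|`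
is bounded below by `δ / 2|w|`; away from them `|εw² - y| ≥ y / 2`. -/
theorem ofReal_neg_log_mul_sq_sub_le {δ ε y : ℝ} (hδ : 0 < δ) (hε : 0 < ε) (hy : δ < y) (w : ℝ) :
    ENNReal.ofReal (-Real.log (ε * w ^ 2 - y)) ≤
      ENNReal.ofReal (-Real.log (δ / 2)) + ENNReal.ofReal (2 * |w| / δ) +
        ENNReal.ofReal (-Real.log (|w| - √(y / ε))) := by
  rcases le_or_gt (ε * w ^ 2) (y / 2) with hfar | hnear
  · have hlog : Real.log (δ / 2) ≤ Real.log (ε * w ^ 2 - y) := by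
      rw [← Real.log_neg_eq_log (ε * w ^ 2 - y)]
      exact Real.log_le_log (by positivity) (by linarith)
    exact le_add_right (le_add_right (ENNReal.ofReal_le_ofReal (neg_le_neg hlog)))
  rcases eq_or_ne (ε * w ^ 2 - y) 0 with h0 | h0
  · simp [h0]
  have hy0 : 0 < y := hδ.trans hy
  set r := √(y / ε)
  have hw : 0 < |w| := abs_pos.2 (by rintro rfl; linarith)
  have hfactor : ε * w ^ 2 - y = (|w| - r) * (ε * (|w| + r)) := by
    have hr : ε * r ^ 2 = y := by rw [Real.sq_sqrt (by positivity)]; field_simp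
    rw [← sq_abs w]
    linear_combination hr
  have hinv : (ε * (|w| + r))⁻¹ ≤ 2 * |w| / δ := by
    rw [inv_le_iff_one_le_mul₀ (by positivity)]
    calc (1 : ℝ) ≤ 2 * |w| / δ * (ε * |w|) := by
          rw [div_mul_eq_mul_div, one_le_div hδ]
          nlinarith [sq_abs w]
      _ ≤ 2 * |w| / δ * (ε * (|w| + r)) := by gcongr; linarith [Real.sqrt_nonneg (y / ε)]
  rw [hfactor] at h0 ⊢
  rw [Real.log_mul (left_ne_zero_of_mul h0) (right_ne_zero_of_mul h0), neg_add, add_comm]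
  have hlog := Real.neg_log_le_inv (show 0 < ε * (|w| + r) by positivity)
  calc ENNReal.ofReal (-Real.log (ε * (|w| + r)) + -Real.log (|w| - r))
      ≤ ENNReal.ofReal (2 * |w| / δ) + ENNReal.ofReal (-Real.log (|w| - r)) :=
        (ENNReal.ofReal_le_ofReal (by linarith)).trans ENNReal.ofReal_add_le
    _ ≤ _ := add_le_add_left le_add_self _

theorem lintegral_ofReal_neg_log_mul_sq_sub_le (μ : Measure ℝ) [IsProbabilityMeasure μ]
    {K : ℝ≥0∞} (hK : ∀ a, ∫⁻ w, ENNReal.ofReal (-Real.log (w - a)) ∂μ ≤ K)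
    {δ ε y : ℝ} (hδ : 0 < δ) (hε : 0 < ε) (hy : δ < y) :
    ∫⁻ w, ENNReal.ofReal (-Real.log (ε * w ^ 2 - y)) ∂μ ≤
      ENNReal.ofReal (-Real.log (δ / 2)) + ∫⁻ w, ENNReal.ofReal (2 * |w| / δ) ∂μ + 2 * K := by
  set r := √(y / ε)
  calc ∫⁻ w, ENNReal.ofReal (-Real.log (ε * w ^ 2 - y)) ∂μ
      ≤ ∫⁻ w, (ENNReal.ofReal (-Real.log (δ / 2)) + ENNReal.ofReal (2 * |w| / δ) +
          (ENNReal.ofReal (-Real.log (w - r)) + ENNReal.ofReal (-Real.log (w - -r)))) ∂μ := by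
        refine lintegral_mono fun w => (ofReal_neg_log_mul_sq_sub_le hδ hε hy w).trans ?_
        rw [sub_neg_eq_add]
        gcongr
        exact ofReal_neg_log_abs_sub_le w r
    _ = ENNReal.ofReal (-Real.log (δ / 2)) + ∫⁻ w, ENNReal.ofReal (2 * |w| / δ) ∂μ +
          (∫⁻ w, ENNReal.ofReal (-Real.log (w - r)) ∂μ +
            ∫⁻ w, ENNReal.ofReal (-Real.log (w - -r)) ∂μ) := by
        rw [lintegral_add_left (by fun_prop), lintegral_add_left (by fun_prop),
          lintegral_add_left (by fun_prop), lintegral_const, measure_univ, mul_one]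
    _ ≤ _ := by
        rw [two_mul]
        gcongr
        exacts [hK r, hK (-r)]

theorem stmt11 (m : ℝ) (v : NNReal) (hv : v ≠ 0) (δ : ℝ) (hδ : 0 < δ) :
    ∃ c : ℝ, ∀ ε y : ℝ, 0 < ε → ε ≤ 1 → δ < y →
      c ≤ ∫ w, Real.log |ε * w ^ 2 - y| ∂(gaussianReal m v) := by
  set μ := gaussianReal m v
  set K := ENNReal.ofReal (√(2 * Real.pi * v))⁻¹ * ∫⁻ u, ENNReal.ofReal (-Real.log u)
  set C := ENNReal.ofReal (-Real.log (δ / 2)) + ∫⁻ w, ENNReal.ofReal (2 * |w| / δ) ∂μ + 2 * K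
  have hC : C ≠ ∞ := by
    have habs : Integrable (fun w => 2 * |w| / δ) μ :=
      (((memLp_id_gaussianReal 1).integrable le_rfl).abs.const_mul 2).div_const δ
    simp [C, K, ENNReal.mul_eq_top, habs.lintegral_lt_top.ne, lintegral_ofReal_neg_log_lt_top.ne]
  refine ⟨-C.toReal, fun ε y hε _ hy => ?_⟩
  have hbound := lintegral_ofReal_neg_log_mul_sq_sub_le μ
    (lintegral_ofReal_neg_log_sub_le_gaussianReal m hv) hδ hε hy
  simp_rw [Real.log_abs]
  exact (neg_le_neg (ENNReal.toReal_mono hC hbound)).trans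
    (neg_toReal_lintegral_ofReal_neg_le_integral μ _)
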